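/- Assume d is not a square in F. Let χ : F^× → ℂ^× be a group homomorphism trivial on o^×, and let Ω : T(F) → ℂ^× be a group homomorphism with conductor exponent C := c(Ω) and with Ω(z·1) = χ(z)² for all z ∈ F^×. Let B : GL₂(F) → ℂ satisfy: (E) B(t·g·k) = Ω(t)·B(g) for all t ∈ T(F), g ∈ GL₂(F), k ∈ I; (N) for every set R ⊆ o of representatives of o/p and every g ∈ GL₂(F), ∑_{u ∈ R} B(g·[[1, 0], [u, 1]]) = −B(g·w); (A) B(g·[[0, 1], [ϖ, 0]]) = −χ(ϖ)·B(g) for all g ∈ GL₂(F). Then for every integer r ≥ 1: if r ≥ C then B(diag(ϖ^r, 1)) = −q·B(diag(ϖ^r, 1)·w), and if r < C then B(diag(ϖ^r, 1)) = 0. -/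

import Mathlib

open Matrix

noncomputable section

abbrev Zm0 : Type := WithZero (Multiplicative ℤ)

/-- `ev n` is the value (in `ℤₘ₀ = WithZero (Multiplicative ℤ)`) of an element of additive
valuation `n`; thus `x ∈ 𝔭^n` iff `v x ≤ ev n`, `x ∈ 𝔬` iff `v x ≤ ev 0`, and `x ∈ 𝔬^×` iff
`v x = ev 0`. -/
def ev (n : ℤ) : Zm0 := ((Multiplicative.ofAdd (-n) : Multiplicative ℤ) : Zm0)

variable {F : Type*} [Field F]

/-- the matrix t(x,y) = [[x, cy],[−ay, x−by]] -/
def tmat (a b c x y : F) : Matrix (Fin 2) (Fin 2) F :=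
  !![x, c * y; -(a * y), x - b * y]

/-- the torus T(F) ⊆ GL₂(F), as a set of matrices -/
def TSet (a b c : F) : Set (Matrix (Fin 2) (Fin 2) F) :=
  {m | ∃ x y : F, x ^ 2 - b * x * y + a * c * y ^ 2 ≠ 0 ∧ m = tmat a b c x y}

def wmat (F : Type*) [Field F] : Matrix (Fin 2) (Fin 2) F := !![0, 1; -1, 0]

/-- GL₂(𝔬) : integral entries and unit determinant -/
def GL2O (v : Valuation F Zm0) : Set (Matrix (Fin 2) (Fin 2) F) :=
  {g | (∀ i j, v (g i j) ≤ ev 0) ∧ v g.det = ev 0}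

/-- the Iwahori subgroup I = { g ∈ GL₂(𝔬) : g₂₁ ∈ 𝔭 } -/
def Iwahori (v : Valuation F Zm0) : Set (Matrix (Fin 2) (Fin 2) F) :=
  {g | g ∈ GL2O v ∧ v (g 1 0) ≤ ev 1}

/-- membership in U_m ⊆ T(F): U_0 = T(F) ∩ GL₂(𝔬), and for m ≥ 1,
U_m = { t ∈ T(F) : t − 1 ∈ ϖ^m·M₂(𝔬) } -/
def Umem (v : Valuation F Zm0) (a b c : F) (m : ℕ) (t : Matrix (Fin 2) (Fin 2) F) : Prop :=
  t ∈ TSet a b c ∧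
    (if m = 0 then (∀ i j, v (t i j) ≤ ev 0) ∧ v t.det = ev 0
     else ∀ i j, v ((t - 1) i j) ≤ ev m)

/-!
Summing (N) at `g = diag(y, 1)` and factoring `diag(y, 1) · [[1, 0], [u, 1]]` for a unit `u` as
`t(cu + by, y) · diag(y, 1) w · k` with `k ∈ I` gives `B(diag(y, 1)) = -S(y) · B(diag(y, 1) w)`,
where `S(y)` sums `Ω(t(cu + by, y))` over the unit representatives `u`, plus `1` for the class
of `0`. Modulo the centre, `t(cu + by, y)` is `t(1, y / (cu + by))`; when `v(y) ≥ C` this lies in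
`U_C`, so `S(y) = q`. When `v(y) = C - 1 ≥ 1`, `z ↦ Ω(t(1, z))` is a nontrivial additive character
of `𝔭^(C-1) / 𝔭^C` and `S(y)` is its full character sum, so `S(y) = 0`. The Atkin–Lehner relation
`B(diag(ϖ^(m+1), 1)) = -χ(ϖ) B(diag(ϖ^m, 1) w)` then carries the vanishing down to every `r < C`.
-/

lemma ev_zero : ev 0 = 1 := by simp [ev]

lemma ev_mul (m n : ℤ) : ev m * ev n = ev (m + n) := by
  rw [ev, ev, ev, ← WithZero.coe_mul, ← ofAdd_add, neg_add]

lemma ev_le_ev {m n : ℤ} : ev m ≤ ev n ↔ n ≤ m := by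
  rw [ev, ev, WithZero.coe_le_coe, Multiplicative.ofAdd_le]; omega

lemma ev_one_le_ev_zero : ev 1 ≤ ev 0 := ev_le_ev.2 zero_le_one

lemma ev_inv (n : ℤ) : (ev n)⁻¹ = ev (-n) := by
  rw [ev, ev, ← WithZero.coe_inv, ← ofAdd_neg]

lemma ev_one_pow (n : ℕ) : ev 1 ^ n = ev n := by
  induction n with
  | zero => simp [ev_zero]
  | succ k ih => rw [pow_succ, ih, ev_mul]; norm_num

lemma eq_ev_zero_of_le_of_not_le {γ : Zm0} (h0 : γ ≤ ev 0) (h1 : ¬ γ ≤ ev 1) : γ = ev 0 := by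
  induction γ using WithZero.recZeroCoe with
  | zero => exact absurd zero_le h1
  | coe x =>
    rw [ev, WithZero.coe_le_coe, ← Multiplicative.toAdd_le, toAdd_ofAdd] at h0 h1
    rw [ev, WithZero.coe_inj, ← ofAdd_toAdd x]
    congr 1
    omega

section Valuation

variable {v : Valuation F Zm0} {x y z : F} {m n : ℤ}

lemma ne_zero_of_map_eq_ev (h : v x = ev n) : x ≠ 0 := by
  rintro rfl
  exact WithZero.coe_ne_zero (h.symm.trans v.map_zero)

lemma map_one_eq_ev_zero : v (1 : F) = ev 0 := by rw [ev_zero, v.map_one]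

lemma map_mul_le_ev (hx : v x ≤ ev m) (hy : v y ≤ ev n) : v (x * y) ≤ ev (m + n) := by
  rw [v.map_mul, ← ev_mul]; exact mul_le_mul' hx hy

lemma map_mul_le_of_le_ev_zero {γ : Zm0} (hx : v x ≤ ev 0) (hy : v y ≤ γ) : v (x * y) ≤ γ := by
  rw [v.map_mul]
  calc v x * v y ≤ ev 0 * γ := mul_le_mul' hx hy
    _ = γ := by rw [ev_zero, one_mul]

lemma map_mul_eq_ev_zero (hx : v x = ev 0) (hy : v y = ev 0) : v (x * y) = ev 0 := by
  rw [v.map_mul, hx, hy, ev_zero, one_mul]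

lemma map_inv_eq_ev_zero (hx : v x = ev 0) : v x⁻¹ = ev 0 := by
  rw [map_inv₀, hx, ev_zero, inv_one]

lemma map_div_le_of_eq_ev_zero {γ : Zm0} (hx : v x ≤ γ) (hy : v y = ev 0) : v (x / y) ≤ γ := by
  rwa [map_div₀, hy, ev_zero, div_one]

lemma map_add_eq_ev_zero (hx : v x = ev 0) (hy : v y ≤ ev 1) : v (x + y) = ev 0 := by
  rw [← hx]
  refine v.map_add_eq_of_lt_left (hy.trans_lt ?_)
  rw [hx, lt_iff_le_not_ge, ev_le_ev, ev_le_ev]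
  omega

lemma map_sub_le_trans {γ : Zm0} (hxy : v (x - y) ≤ γ) (hyz : v (y - z) ≤ γ) :
    v (x - z) ≤ γ := by
  rw [← sub_add_sub_cancel x y z]; exact v.map_add_le hxy hyz

end Valuation

section Torus

variable {a b c : F}

lemma tmat_mul (x y x' y' : F) :
    tmat a b c x y * tmat a b c x' y' =
      tmat a b c (x * x' - a * c * (y * y')) (x * y' + x' * y - b * (y * y')) := by
  ext i j
  fin_cases i <;> fin_cases j <;> simp [tmat, Matrix.mul_apply] <;> ring

lemma det_tmat (x y : F) : (tmat a b c x y).det = x ^ 2 - b * x * y + a * c * y ^ 2 := by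
  simp [tmat, Matrix.det_fin_two]; ring

lemma tmat_one_zero : tmat a b c 1 0 = 1 := by
  ext i j; fin_cases i <;> fin_cases j <;> simp [tmat]

lemma tmat_zero_right (x : F) : tmat a b c x 0 = x • (1 : Matrix (Fin 2) (Fin 2) F) := by
  ext i j; fin_cases i <;> fin_cases j <;> simp [tmat]

lemma tmat_eq_tmat_mul_tmat_one {x : F} (y : F) (hx : x ≠ 0) :
    tmat a b c x y = tmat a b c x 0 * tmat a b c 1 (x⁻¹ * y) := by
  rw [tmat_mul]; congr 1 <;> field_simp <;> ring

lemma tmat_mem_TSet_iff {x y : F} :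
    tmat a b c x y ∈ TSet a b c ↔ x ^ 2 - b * x * y + a * c * y ^ 2 ≠ 0 := by
  refine ⟨fun ⟨x', y', h, e⟩ => ?_, fun h => ⟨x, y, h, rfl⟩⟩
  rwa [← det_tmat, e, det_tmat]

lemma one_mem_TSet : (1 : Matrix (Fin 2) (Fin 2) F) ∈ TSet a b c := by
  rw [← tmat_one_zero, tmat_mem_TSet_iff]; norm_num

end Torus

lemma diag_mul_lower_eq (a b c y u : F) (hc : c ≠ 0)
    (hE : c * u ^ 2 + b * u * y + a * y ^ 2 ≠ 0) :
    !![y, 0; 0, 1] * !![1, 0; u, 1] =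
      tmat a b c (c * u + b * y) y * (!![y, 0; 0, 1] * wmat F) *
        !![-c⁻¹, -((c * u + b * y) / (c * (c * u ^ 2 + b * u * y + a * y ^ 2)));
          0, -(c * u ^ 2 + b * u * y + a * y ^ 2)⁻¹] := by
  generalize hE' : c * u ^ 2 + b * u * y + a * y ^ 2 = E at hE ⊢
  ext i j
  fin_cases i <;> fin_cases j <;> simp [tmat, wmat, Matrix.mul_apply] <;> field_simp
  all_goals (rw [← hE']; ring)

lemma diag_mul_wmat_mul_atkinLehner (y t : F) :
    !![y, 0; 0, 1] * wmat F * !![0, 1; t, 0] = !![y * t, 0; 0, 1] * !![1, 0; 0, -1] := by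
  ext i j
  fin_cases i <;> fin_cases j <;> simp [wmat, Matrix.mul_apply]

section Integral

variable {v : Valuation F Zm0} {a b c : F}

lemma mem_Iwahori_of_unit_diag {α β γ δ : F} (hα : v α = ev 0) (hβ : v β ≤ ev 0)
    (hγ : v γ ≤ ev 1) (hδ : v δ = ev 0) : !![α, β; γ, δ] ∈ Iwahori v := by
  have hγ0 : v γ ≤ ev 0 := hγ.trans ev_one_le_ev_zero
  refine ⟨⟨fun i j => ?_, ?_⟩, by simpa using hγ⟩
  · fin_cases i <;> fin_cases j <;> simp [hα.le, hβ, hγ0, hδ.le]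
  · rw [Matrix.det_fin_two_of, sub_eq_add_neg]
    refine map_add_eq_ev_zero (map_mul_eq_ev_zero hα hδ) ?_
    rw [v.map_neg]; exact map_mul_le_of_le_ev_zero hβ hγ

lemma forall_entries_le_iff {γ : Zm0} {p q r s : F} :
    (∀ i j, v (!![p, q; r, s] i j) ≤ γ) ↔ v p ≤ γ ∧ v q ≤ γ ∧ v r ≤ γ ∧ v s ≤ γ := by
  simp [Fin.forall_fin_two, and_assoc]

lemma map_det_tmat_eq_ev_zero (hao : v a ≤ ev 0) (hbo : v b ≤ ev 0) (hco : v c ≤ ev 0)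
    {x y : F} (hx : v x = ev 0) (hy : v y ≤ ev 1) :
    v (x ^ 2 - b * x * y + a * c * y ^ 2) = ev 0 := by
  rw [sub_add_eq_add_sub, add_sub_assoc]
  refine map_add_eq_ev_zero (by rw [map_pow, hx, ev_zero, one_pow]) (v.map_sub_le ?_ ?_)
  · exact map_mul_le_of_le_ev_zero (map_mul_le_of_le_ev_zero hao hco)
      (by rw [sq]; exact map_mul_le_of_le_ev_zero (hy.trans ev_one_le_ev_zero) hy)
  · exact map_mul_le_of_le_ev_zero (map_mul_le_of_le_ev_zero hbo hx.le) hy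

lemma tmat_mem_TSet_of_unit (hao : v a ≤ ev 0) (hbo : v b ≤ ev 0) (hco : v c ≤ ev 0)
    {x y : F} (hx : v x = ev 0) (hy : v y ≤ ev 1) : tmat a b c x y ∈ TSet a b c :=
  tmat_mem_TSet_iff.2 (ne_zero_of_map_eq_ev (map_det_tmat_eq_ev_zero hao hbo hco hx hy))

lemma Umem_tmat_one (hao : v a ≤ ev 0) (hbo : v b ≤ ev 0) (hco : v c ≤ ev 0) {m : ℕ} {z : F}
    (hz1 : v z ≤ ev 1) (hzm : v z ≤ ev m) : Umem v a b c m (tmat a b c 1 z) := by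
  refine ⟨tmat_mem_TSet_of_unit hao hbo hco map_one_eq_ev_zero hz1, ?_⟩
  split_ifs with hm
  · have hz0 : v z ≤ ev 0 := by simpa [hm] using hzm
    refine ⟨forall_entries_le_iff.2 ⟨?_, map_mul_le_of_le_ev_zero hco hz0, ?_, ?_⟩, ?_⟩
    · rw [map_one_eq_ev_zero]
    · rw [v.map_neg]; exact map_mul_le_of_le_ev_zero hao hz0
    · exact v.map_sub_le map_one_eq_ev_zero.le (map_mul_le_of_le_ev_zero hbo hz0)
    · rw [det_tmat]; exact map_det_tmat_eq_ev_zero hao hbo hco map_one_eq_ev_zero hz1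
  · have hsub : tmat a b c 1 z - 1 = !![0, c * z; -(a * z), -(b * z)] := by
      ext i j; fin_cases i <;> fin_cases j <;> simp [tmat]
    rw [hsub, forall_entries_le_iff, v.map_neg, v.map_neg]
    exact ⟨by simp, map_mul_le_of_le_ev_zero hco hzm, map_mul_le_of_le_ev_zero hao hzm,
      map_mul_le_of_le_ev_zero hbo hzm⟩

end Integral

section TorusCharacter

variable {v : Valuation F Zm0} {a b c : F} {Ω : Matrix (Fin 2) (Fin 2) F → ℂ}

lemma apply_one_eq_one_of_map_mul
    (hΩmul : ∀ s t, s ∈ TSet a b c → t ∈ TSet a b c → Ω (s * t) = Ω s * Ω t)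
    (hΩne : ∀ t ∈ TSet a b c, Ω t ≠ 0) : Ω 1 = 1 := by
  have h := hΩmul 1 1 one_mem_TSet one_mem_TSet
  rw [mul_one] at h
  exact (mul_eq_left₀ (hΩne 1 one_mem_TSet)).1 h.symm

lemma apply_tmat_eq_apply_tmat_one
    (hΩmul : ∀ s t, s ∈ TSet a b c → t ∈ TSet a b c → Ω (s * t) = Ω s * Ω t)
    (hcentral : ∀ x, v x = ev 0 → Ω (x • 1) = 1)
    {x y : F} (hx : v x = ev 0) (h : tmat a b c x y ∈ TSet a b c) :
    Ω (tmat a b c x y) = Ω (tmat a b c 1 (x⁻¹ * y)) := by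
  have hx0 := ne_zero_of_map_eq_ev hx
  have hscalar : tmat a b c x 0 ∈ TSet a b c := by
    rw [tmat_mem_TSet_iff]; simpa using hx0
  have hunip : tmat a b c 1 (x⁻¹ * y) ∈ TSet a b c := by
    rw [tmat_mem_TSet_iff] at h ⊢
    convert div_ne_zero h (pow_ne_zero 2 hx0) using 1
    field_simp
  rw [tmat_eq_tmat_mul_tmat_one y hx0, hΩmul _ _ hscalar hunip, tmat_zero_right,
    hcentral x hx, one_mul]

lemma apply_tmat_one_congr (hao : v a ≤ ev 0) (hbo : v b ≤ ev 0) (hco : v c ≤ ev 0)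
    (hΩmul : ∀ s t, s ∈ TSet a b c → t ∈ TSet a b c → Ω (s * t) = Ω s * Ω t)
    (hΩne : ∀ t ∈ TSet a b c, Ω t ≠ 0) (hcentral : ∀ x, v x = ev 0 → Ω (x • 1) = 1)
    {C : ℕ} (hcond : ∀ t, Umem v a b c C t → Ω t = 1)
    {z z' : F} (hz : v z ≤ ev 1) (hz' : v z' ≤ ev 1) (hzz' : v (z - z') ≤ ev C) :
    Ω (tmat a b c 1 z) = Ω (tmat a b c 1 z') := by
  have hac : v (a * c) ≤ ev 0 := map_mul_le_of_le_ev_zero hao hco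
  have hu : v (1 - b * z') = ev 0 := by
    rw [sub_eq_add_neg]
    exact map_add_eq_ev_zero map_one_eq_ev_zero
      (by rw [v.map_neg]; exact map_mul_le_of_le_ev_zero hbo hz')
  have hX : v (1 - b * z' + a * c * z * z') = ev 0 := map_add_eq_ev_zero hu
    (map_mul_le_of_le_ev_zero (map_mul_le_of_le_ev_zero hac (hz.trans ev_one_le_ev_zero)) hz')
  have hΔ : v (1 - b * z' + a * c * z' * z') = ev 0 := map_add_eq_ev_zero hu
    (map_mul_le_of_le_ev_zero (map_mul_le_of_le_ev_zero hac (hz'.trans ev_one_le_ev_zero)) hz')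
  -- `w` is the adjugate of `tmat a b c 1 z'`
  set w := tmat a b c (1 - b * z') (-z')
  have hw : w ∈ TSet a b c := tmat_mem_TSet_of_unit hao hbo hco hu (by rwa [v.map_neg])
  have hmul_w : Ω (tmat a b c 1 z) * Ω w = 1 := by
    have e : tmat a b c 1 z * w = tmat a b c (1 - b * z' + a * c * z * z') (z - z') := by
      rw [tmat_mul]; congr 1 <;> ring
    have hdiff : v (z - z') ≤ ev 1 := v.map_sub_le hz hz'
    rw [← hΩmul _ _ (tmat_mem_TSet_of_unit hao hbo hco map_one_eq_ev_zero hz) hw, e,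
      apply_tmat_eq_apply_tmat_one hΩmul hcentral hX (tmat_mem_TSet_of_unit hao hbo hco hX hdiff)]
    exact hcond _ (Umem_tmat_one hao hbo hco
      (map_mul_le_of_le_ev_zero (map_inv_eq_ev_zero hX).le hdiff)
      (map_mul_le_of_le_ev_zero (map_inv_eq_ev_zero hX).le hzz'))
  have hmul_w' : Ω (tmat a b c 1 z') * Ω w = 1 := by
    have e : tmat a b c 1 z' * w = tmat a b c (1 - b * z' + a * c * z' * z') 0 := by
      rw [tmat_mul]; congr 1 <;> ring
    rw [← hΩmul _ _ (tmat_mem_TSet_of_unit hao hbo hco map_one_eq_ev_zero hz') hw, e,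
      tmat_zero_right, hcentral _ hΔ]
  exact mul_right_cancel₀ (hΩne w hw) (hmul_w.trans hmul_w'.symm)

lemma apply_tmat_one_add (hao : v a ≤ ev 0) (hbo : v b ≤ ev 0) (hco : v c ≤ ev 0)
    (hΩmul : ∀ s t, s ∈ TSet a b c → t ∈ TSet a b c → Ω (s * t) = Ω s * Ω t)
    (hΩne : ∀ t ∈ TSet a b c, Ω t ≠ 0) (hcentral : ∀ x, v x = ev 0 → Ω (x • 1) = 1)
    {C : ℕ} (hcond : ∀ t, Umem v a b c C t → Ω t = 1)
    {n : ℕ} (hn : 1 ≤ n) (hCn : C ≤ 2 * n) {z z' : F} (hz : v z ≤ ev n) (hz' : v z' ≤ ev n) :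
    Ω (tmat a b c 1 (z + z')) = Ω (tmat a b c 1 z) * Ω (tmat a b c 1 z') := by
  have hn1 : ev n ≤ ev 1 := ev_le_ev.2 (by exact_mod_cast hn)
  have hac : v (a * c) ≤ ev 0 := map_mul_le_of_le_ev_zero hao hco
  have hzz' : v (z * z') ≤ ev (n + n) := map_mul_le_ev hz hz'
  have hzz'1 : v (z * z') ≤ ev 1 := hzz'.trans (ev_le_ev.2 (by omega))
  have hsum : v (z + z') ≤ ev 1 := v.map_add_le (hz.trans hn1) (hz'.trans hn1)
  have hX : v (1 - a * c * (z * z')) = ev 0 := by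
    rw [sub_eq_add_neg]
    exact map_add_eq_ev_zero map_one_eq_ev_zero
      (by rw [v.map_neg]; exact map_mul_le_of_le_ev_zero hac hzz'1)
  have hY : v (z' + z - b * (z * z')) ≤ ev 1 :=
    v.map_sub_le (by rw [add_comm]; exact hsum) (map_mul_le_of_le_ev_zero hbo hzz'1)
  have hprod : tmat a b c 1 z * tmat a b c 1 z' =
      tmat a b c (1 - a * c * (z * z')) (z' + z - b * (z * z')) := by
    rw [tmat_mul]; simp only [one_mul]
  rw [← hΩmul _ _ (tmat_mem_TSet_of_unit hao hbo hco map_one_eq_ev_zero (hz.trans hn1))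
      (tmat_mem_TSet_of_unit hao hbo hco map_one_eq_ev_zero (hz'.trans hn1)), hprod,
    apply_tmat_eq_apply_tmat_one hΩmul hcentral hX (tmat_mem_TSet_of_unit hao hbo hco hX hY)]
  refine apply_tmat_one_congr hao hbo hco hΩmul hΩne hcentral hcond hsum
    (map_mul_le_of_le_ev_zero (map_inv_eq_ev_zero hX).le hY) ?_
  have e : z + z' - (1 - a * c * (z * z'))⁻¹ * (z' + z - b * (z * z')) =
      z * z' * (b - a * c * (z + z')) / (1 - a * c * (z * z')) := by
    rw [eq_div_iff (ne_zero_of_map_eq_ev hX), sub_mul, inv_mul_eq_div,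
      div_mul_cancel₀ _ (ne_zero_of_map_eq_ev hX)]
    ring
  rw [e]
  refine map_div_le_of_eq_ev_zero ((map_mul_le_ev hzz' (v.map_sub_le hbo
    (map_mul_le_of_le_ev_zero hac (hsum.trans ev_one_le_ev_zero)))).trans ?_) hX
  exact ev_le_ev.2 (by omega)

lemma exists_apply_tmat_one_ne_one (hc : v c = ev 0)
    (hΩmul : ∀ s t, s ∈ TSet a b c → t ∈ TSet a b c → Ω (s * t) = Ω s * Ω t)
    (hcentral : ∀ x, v x = ev 0 → Ω (x • 1) = 1)
    {n : ℕ} (hn : n ≠ 0) {t : Matrix (Fin 2) (Fin 2) F} (ht : Umem v a b c n t) (hΩt : Ω t ≠ 1) :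
    ∃ z, v z ≤ ev n ∧ Ω (tmat a b c 1 z) ≠ 1 := by
  obtain ⟨⟨x, y, hQ, rfl⟩, hent⟩ := ht
  have hsub : tmat a b c x y - 1 = !![x - 1, c * y; -(a * y), x - b * y - 1] := by
    ext i j; fin_cases i <;> fin_cases j <;> simp [tmat]
  rw [if_neg hn, hsub, forall_entries_le_iff] at hent
  obtain ⟨hx1, hcy, -, -⟩ := hent
  have hy : v y ≤ ev n := by rwa [v.map_mul, hc, ev_zero, one_mul] at hcy
  have hx : v x = ev 0 := by
    rw [← add_sub_cancel 1 x]
    exact map_add_eq_ev_zero map_one_eq_ev_zero (hx1.trans (ev_le_ev.2 (by omega)))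
  refine ⟨x⁻¹ * y, map_mul_le_of_le_ev_zero (map_inv_eq_ev_zero hx).le hy, ?_⟩
  rwa [← apply_tmat_eq_apply_tmat_one hΩmul hcentral hx (tmat_mem_TSet_iff.2 hQ)]

end TorusCharacter

def IsResidueReps (v : Valuation F Zm0) (R : Finset F) : Prop :=
  (∀ r ∈ R, v r ≤ ev 0) ∧ ∀ x : F, v x ≤ ev 0 → ∃! r, r ∈ R ∧ v (x - r) ≤ ev 1

namespace IsResidueReps

variable {v : Valuation F Zm0} {R : Finset F}

def rep (hR : IsResidueReps v R) (x : F) : F :=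
  if h : v x ≤ ev 0 then (hR.2 x h).exists.choose else 0

lemma rep_spec (hR : IsResidueReps v R) {x : F} (hx : v x ≤ ev 0) :
    hR.rep x ∈ R ∧ v (hR.rep x - x) ≤ ev 1 := by
  rw [rep, dif_pos hx, v.map_sub_swap]; exact (hR.2 x hx).exists.choose_spec

lemma eq_rep (hR : IsResidueReps v R) {x u : F} (hx : v x ≤ ev 0) (hu : u ∈ R)
    (hxu : v (x - u) ≤ ev 1) : u = hR.rep x := by
  refine (hR.2 x hx).unique ⟨hu, hxu⟩ ⟨(hR.rep_spec hx).1, ?_⟩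
  rw [v.map_sub_swap]; exact (hR.rep_spec hx).2

lemma card_filter_le_ev_one (hR : IsResidueReps v R) :
    (R.filter fun u => v u ≤ ev 1).card = 1 := by
  obtain ⟨r, ⟨hr, hr0⟩, huniq⟩ := hR.2 0 (by simp)
  refine Finset.card_eq_one.2 ⟨r, Finset.ext fun u => ?_⟩
  simp only [Finset.mem_filter, Finset.mem_singleton]
  refine ⟨fun ⟨hu, hu0⟩ => huniq u ⟨hu, by rwa [zero_sub, v.map_neg]⟩, ?_⟩
  rintro rfl
  exact ⟨hr, by rwa [zero_sub, v.map_neg] at hr0⟩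

theorem sum_comp_eq (hR : IsResidueReps v R) {M : Type*} [AddCommMonoid M] {f : F → M}
    {σ τ : F → F}
    (hf : ∀ x y, v x ≤ ev 0 → v y ≤ ev 0 → v (x - y) ≤ ev 1 → f x = f y)
    (hσ : ∀ x, v x ≤ ev 0 → v (σ x) ≤ ev 0) (hτ : ∀ x, v x ≤ ev 0 → v (τ x) ≤ ev 0)
    (hσc : ∀ x y, v x ≤ ev 0 → v y ≤ ev 0 → v (x - y) ≤ ev 1 → v (σ x - σ y) ≤ ev 1)
    (hτc : ∀ x y, v x ≤ ev 0 → v y ≤ ev 0 → v (x - y) ≤ ev 1 → v (τ x - τ y) ≤ ev 1)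
    (hστ : ∀ x, v x ≤ ev 0 → v (σ (τ x) - x) ≤ ev 1)
    (hτσ : ∀ x, v x ≤ ev 0 → v (τ (σ x) - x) ≤ ev 1) :
    ∑ u ∈ R, f (σ u) = ∑ u ∈ R, f u := by
  have hrep : ∀ x, v x ≤ ev 0 → v (hR.rep x) ≤ ev 0 := fun x hx => hR.1 _ (hR.rep_spec hx).1
  have inv : ∀ {σ τ : F → F}, (∀ x, v x ≤ ev 0 → v (σ x) ≤ ev 0) →
      (∀ x, v x ≤ ev 0 → v (τ x) ≤ ev 0) →
      (∀ x y, v x ≤ ev 0 → v y ≤ ev 0 → v (x - y) ≤ ev 1 → v (τ x - τ y) ≤ ev 1) →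
      (∀ x, v x ≤ ev 0 → v (τ (σ x) - x) ≤ ev 1) →
      ∀ u ∈ R, hR.rep (τ (hR.rep (σ u))) = u := by
    intro σ τ hσ hτ hτc hτσ u hu
    have hu0 := hR.1 u hu
    refine (hR.eq_rep (hτ _ (hrep _ (hσ u hu0))) hu (map_sub_le_trans ?_ (hτσ u hu0))).symm
    exact hτc _ _ (hrep _ (hσ u hu0)) (hσ u hu0) (hR.rep_spec (hσ u hu0)).2
  refine Finset.sum_nbij' (fun u => hR.rep (σ u)) (fun u => hR.rep (τ u))
    (fun u hu => (hR.rep_spec (hσ u (hR.1 u hu))).1)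
    (fun u hu => (hR.rep_spec (hτ u (hR.1 u hu))).1)
    (inv hσ hτ hτc hτσ) (inv hτ hσ hσc hστ) fun u hu => ?_
  have hσu := hσ u (hR.1 u hu)
  exact hf _ _ hσu (hrep _ hσu) (by rw [v.map_sub_swap]; exact (hR.rep_spec hσu).2)

theorem sum_eq_zero_of_map_add (hR : IsResidueReps v R) {K : Type*} [CommRing K] [IsDomain K]
    {f : F → K}
    (hf : ∀ x y, v x ≤ ev 0 → v y ≤ ev 0 → v (x - y) ≤ ev 1 → f x = f y)
    (hadd : ∀ x y, v x ≤ ev 0 → v y ≤ ev 0 → f (x + y) = f x * f y)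
    {s : F} (hs : v s ≤ ev 0) (hfs : f s ≠ 1) : ∑ u ∈ R, f u = 0 := by
  have hshift := hR.sum_comp_eq (σ := (· + s)) (τ := (· - s)) hf
    (fun x hx => v.map_add_le hx hs) (fun x hx => v.map_sub_le hx hs)
    (fun x y _ _ h => by rwa [add_sub_add_right_eq_sub])
    (fun x y _ _ h => by rwa [sub_sub_sub_cancel_right]) (fun x _ => by simp)
    (fun x _ => by simp)
  rw [Finset.sum_congr rfl fun u hu => hadd u s (hR.1 u hu) hs, ← Finset.sum_mul] at hshift
  by_contra hS
  exact hfs ((mul_eq_left₀ hS).1 hshift)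

end IsResidueReps

section ResidueInverse

variable {v : Valuation F Zm0} {x y : F}

def resInv (v : Valuation F Zm0) (x : F) : F := if v x ≤ ev 1 then 0 else x⁻¹

lemma resInv_of_not_le (hx : ¬ v x ≤ ev 1) : resInv v x = x⁻¹ := if_neg hx

lemma resInv_of_le (hx : v x ≤ ev 1) : resInv v x = 0 := if_pos hx

lemma map_resInv_le (hx : v x ≤ ev 0) : v (resInv v x) ≤ ev 0 := by
  unfold resInv
  split_ifs with h
  · simp
  · exact (map_inv_eq_ev_zero (eq_ev_zero_of_le_of_not_le hx h)).le

lemma resInv_congr (hx : v x ≤ ev 0) (hy : v y ≤ ev 0) (hxy : v (x - y) ≤ ev 1) :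
    v (resInv v x - resInv v y) ≤ ev 1 := by
  by_cases hx1 : v x ≤ ev 1
  · have hy1 : v y ≤ ev 1 := by simpa using v.map_sub_le hx1 hxy
    simp [resInv_of_le hx1, resInv_of_le hy1]
  · have hy1 : ¬ v y ≤ ev 1 := fun hy1 => hx1 (by simpa using v.map_add_le hxy hy1)
    have hxu := eq_ev_zero_of_le_of_not_le hx hx1
    have hyu := eq_ev_zero_of_le_of_not_le hy hy1
    rw [resInv_of_not_le hx1, resInv_of_not_le hy1,
      inv_sub_inv (ne_zero_of_map_eq_ev hxu) (ne_zero_of_map_eq_ev hyu)]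
    exact map_div_le_of_eq_ev_zero (by rwa [v.map_sub_swap]) (map_mul_eq_ev_zero hxu hyu)

lemma resInv_resInv (hx : v x ≤ ev 0) : v (resInv v (resInv v x) - x) ≤ ev 1 := by
  by_cases hx1 : v x ≤ ev 1
  · simpa [resInv_of_le hx1, resInv_of_le (show v (0 : F) ≤ ev 1 by simp)] using hx1
  · have hxu := eq_ev_zero_of_le_of_not_le hx hx1
    have hinv1 : ¬ v x⁻¹ ≤ ev 1 := by rw [map_inv_eq_ev_zero hxu, ev_le_ev]; omega
    rw [resInv_of_not_le hx1, resInv_of_not_le hinv1, inv_inv, sub_self, v.map_zero]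
    exact zero_le

end ResidueInverse

def torusSum (v : Valuation F Zm0) (a b c : F) (Ω : Matrix (Fin 2) (Fin 2) F → ℂ)
    (R : Finset F) (y : F) : ℂ :=
  ∑ u ∈ R, if v u ≤ ev 1 then 1 else Ω (tmat a b c (c * u + b * y) y)

section TorusSum

variable {v : Valuation F Zm0} {a b c : F} {Ω : Matrix (Fin 2) (Fin 2) F → ℂ} {R : Finset F}

lemma torusSum_eq_card (hao : v a ≤ ev 0) (hbo : v b ≤ ev 0) (hc : v c = ev 0)
    (hΩmul : ∀ s t, s ∈ TSet a b c → t ∈ TSet a b c → Ω (s * t) = Ω s * Ω t)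
    (hcentral : ∀ x, v x = ev 0 → Ω (x • 1) = 1)
    {C : ℕ} (hcond : ∀ t, Umem v a b c C t → Ω t = 1) (hR : IsResidueReps v R)
    {y : F} (hy1 : v y ≤ ev 1) (hyC : v y ≤ ev C) : torusSum v a b c Ω R y = R.card := by
  rw [torusSum, Finset.card_eq_sum_ones, Nat.cast_sum, Nat.cast_one]
  refine Finset.sum_congr rfl fun u hu => ?_
  split_ifs with hu1
  · rfl
  have hx : v (c * u + b * y) = ev 0 := map_add_eq_ev_zero
    (map_mul_eq_ev_zero hc (eq_ev_zero_of_le_of_not_le (hR.1 u hu) hu1))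
    (map_mul_le_of_le_ev_zero hbo hy1)
  have hxinv : v (c * u + b * y)⁻¹ ≤ ev 0 := (map_inv_eq_ev_zero hx).le
  rw [apply_tmat_eq_apply_tmat_one hΩmul hcentral hx (tmat_mem_TSet_of_unit hao hbo hc.le hx hy1)]
  exact hcond _ (Umem_tmat_one hao hbo hc.le (map_mul_le_of_le_ev_zero hxinv hy1)
    (map_mul_le_of_le_ev_zero hxinv hyC))

lemma apply_tmat_eq_apply_tmat_one_mul_inv (hao : v a ≤ ev 0) (hbo : v b ≤ ev 0)
    (hc : v c = ev 0)
    (hΩmul : ∀ s t, s ∈ TSet a b c → t ∈ TSet a b c → Ω (s * t) = Ω s * Ω t)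
    (hΩne : ∀ t ∈ TSet a b c, Ω t ≠ 0) (hcentral : ∀ x, v x = ev 0 → Ω (x • 1) = 1)
    {n : ℕ} (hn : 1 ≤ n) (hcond : ∀ t, Umem v a b c (n + 1) t → Ω t = 1)
    {u y : F} (hu : v u = ev 0) (hy : v y ≤ ev n) :
    Ω (tmat a b c (c * u + b * y) y) = Ω (tmat a b c 1 (y * (c⁻¹ * u⁻¹))) := by
  have hy1 : v y ≤ ev 1 := hy.trans (ev_le_ev.2 (by exact_mod_cast hn))
  have hcu : v (c * u) = ev 0 := map_mul_eq_ev_zero hc hu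
  have hx : v (c * u + b * y) = ev 0 := map_add_eq_ev_zero hcu (map_mul_le_of_le_ev_zero hbo hy1)
  have hyinv : v (y * (c⁻¹ * u⁻¹)) ≤ ev 1 := by
    rw [mul_comm]
    exact map_mul_le_of_le_ev_zero (map_mul_eq_ev_zero (map_inv_eq_ev_zero hc)
      (map_inv_eq_ev_zero hu)).le hy1
  rw [apply_tmat_eq_apply_tmat_one hΩmul hcentral hx (tmat_mem_TSet_of_unit hao hbo hc.le hx hy1)]
  refine apply_tmat_one_congr hao hbo hc.le hΩmul hΩne hcentral hcond
    (map_mul_le_of_le_ev_zero (map_inv_eq_ev_zero hx).le hy1) hyinv ?_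
  have e : (c * u + b * y)⁻¹ * y - y * (c⁻¹ * u⁻¹) =
      -(y * (b * y)) / (c * u * (c * u + b * y)) := by
    have hc0 := ne_zero_of_map_eq_ev hc
    have hu0 := ne_zero_of_map_eq_ev hu
    have hx0 := ne_zero_of_map_eq_ev hx
    field_simp
    ring
  rw [e]
  refine map_div_le_of_eq_ev_zero ?_ (map_mul_eq_ev_zero hcu hx)
  rw [v.map_neg]
  exact (map_mul_le_ev hy (map_mul_le_of_le_ev_zero hbo hy)).trans (ev_le_ev.2 (by omega))

/-- At depth one below the conductor, `s ↦ Ω (t(1, y c⁻¹ s))` is a nontrivial additive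
character of `𝔬/𝔭`, and `u ↦ 1 / u` permutes the residue classes of units. -/
lemma torusSum_eq_zero (hao : v a ≤ ev 0) (hbo : v b ≤ ev 0) (hc : v c = ev 0)
    (hΩmul : ∀ s t, s ∈ TSet a b c → t ∈ TSet a b c → Ω (s * t) = Ω s * Ω t)
    (hΩne : ∀ t ∈ TSet a b c, Ω t ≠ 0) (hcentral : ∀ x, v x = ev 0 → Ω (x • 1) = 1)
    {n : ℕ} (hn : 1 ≤ n) (hcond : ∀ t, Umem v a b c (n + 1) t → Ω t = 1)
    (hR : IsResidueReps v R) {y : F} (hy : v y = ev n)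
    {z₀ : F} (hz₀ : v z₀ ≤ ev n) (hΩz₀ : Ω (tmat a b c 1 z₀) ≠ 1) :
    torusSum v a b c Ω R y = 0 := by
  have hscale : ∀ {s : F} {k : ℤ}, v s ≤ ev k → v (y * (c⁻¹ * s)) ≤ ev (n + k) := fun hs =>
    map_mul_le_ev hy.le (map_mul_le_of_le_ev_zero (map_inv_eq_ev_zero hc).le hs)
  have hscale₀ : ∀ {s : F}, v s ≤ ev 0 → v (y * (c⁻¹ * s)) ≤ ev n := fun hs => by
    simpa using hscale hs
  have hn1 : ev n ≤ ev 1 := ev_le_ev.2 (by exact_mod_cast hn)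
  have hcongr : ∀ s s', v s ≤ ev 0 → v s' ≤ ev 0 → v (s - s') ≤ ev 1 →
      Ω (tmat a b c 1 (y * (c⁻¹ * s))) = Ω (tmat a b c 1 (y * (c⁻¹ * s'))) :=
    fun s s' hs hs' hss' => apply_tmat_one_congr hao hbo hc.le hΩmul hΩne hcentral hcond
      ((hscale₀ hs).trans hn1) ((hscale₀ hs').trans hn1)
      (by rw [← mul_sub, ← mul_sub]; exact_mod_cast hscale hss')
  have hadd : ∀ s s', v s ≤ ev 0 → v s' ≤ ev 0 → Ω (tmat a b c 1 (y * (c⁻¹ * (s + s')))) =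
      Ω (tmat a b c 1 (y * (c⁻¹ * s))) * Ω (tmat a b c 1 (y * (c⁻¹ * s'))) :=
    fun s s' hs hs' => by
      rw [mul_add, mul_add]
      exact apply_tmat_one_add hao hbo hc.le hΩmul hΩne hcentral hcond hn (by omega)
        (hscale₀ hs) (hscale₀ hs')
  have hterm : ∀ u ∈ R, (if v u ≤ ev 1 then 1 else Ω (tmat a b c (c * u + b * y) y)) =
      Ω (tmat a b c 1 (y * (c⁻¹ * resInv v u))) := by
    intro u hu
    split_ifs with hu1
    · rw [resInv_of_le hu1, mul_zero, mul_zero, tmat_one_zero,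
        apply_one_eq_one_of_map_mul hΩmul hΩne]
    · rw [resInv_of_not_le hu1]
      exact apply_tmat_eq_apply_tmat_one_mul_inv hao hbo hc hΩmul hΩne hcentral hn hcond
        (eq_ev_zero_of_le_of_not_le (hR.1 u hu) hu1) hy.le
  rw [torusSum, Finset.sum_congr rfl hterm, hR.sum_comp_eq hcongr (fun _ => map_resInv_le)
    (fun _ => map_resInv_le) (fun _ _ => resInv_congr) (fun _ _ => resInv_congr)
    (fun _ => resInv_resInv) (fun _ => resInv_resInv)]
  have hy0 := ne_zero_of_map_eq_ev hy
  have hc0 := ne_zero_of_map_eq_ev hc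
  refine hR.sum_eq_zero_of_map_add hcongr hadd (s := c * (y⁻¹ * z₀)) ?_
    (by field_simp; exact hΩz₀)
  refine map_mul_le_of_le_ev_zero hc.le ?_
  rw [v.map_mul, map_inv₀, hy, ev_inv, ← neg_add_cancel (n : ℤ), ← ev_mul]
  exact mul_le_mul' le_rfl hz₀

end TorusSum

section IwahoriVector

variable {v : Valuation F Zm0} {a b c : F} {Ω B : Matrix (Fin 2) (Fin 2) F → ℂ}

lemma apply_diag_mul_lower_of_unit (hao : v a ≤ ev 0) (hbo : v b ≤ ev 0) (hc : v c = ev 0)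
    (hE : ∀ t g k, t ∈ TSet a b c → k ∈ Iwahori v → B (t * g * k) = Ω t * B g)
    {y u : F} (hy : v y ≤ ev 1) (hu : v u = ev 0) :
    B (!![y, 0; 0, 1] * !![1, 0; u, 1]) =
      Ω (tmat a b c (c * u + b * y) y) * B (!![y, 0; 0, 1] * wmat F) := by
  have hy0 : v y ≤ ev 0 := hy.trans ev_one_le_ev_zero
  have hx : v (c * u + b * y) = ev 0 :=
    map_add_eq_ev_zero (map_mul_eq_ev_zero hc hu) (map_mul_le_of_le_ev_zero hbo hy)
  have hE0 : v (c * u ^ 2 + b * u * y + a * y ^ 2) = ev 0 := by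
    rw [add_assoc]
    refine map_add_eq_ev_zero (map_mul_eq_ev_zero hc (by rw [map_pow, hu, ev_zero, one_pow]))
      (v.map_add_le (map_mul_le_of_le_ev_zero (map_mul_le_of_le_ev_zero hbo hu.le) hy) ?_)
    exact map_mul_le_of_le_ev_zero hao (by rw [sq]; exact map_mul_le_of_le_ev_zero hy0 hy)
  rw [diag_mul_lower_eq a b c y u (ne_zero_of_map_eq_ev hc) (ne_zero_of_map_eq_ev hE0)]
  refine hE _ _ _ (tmat_mem_TSet_of_unit hao hbo hc.le hx hy)
    (mem_Iwahori_of_unit_diag (by rw [v.map_neg]; exact map_inv_eq_ev_zero hc) ?_ (by simp)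
      (by rw [v.map_neg]; exact map_inv_eq_ev_zero hE0))
  rw [v.map_neg]
  exact map_div_le_of_eq_ev_zero hx.le (map_mul_eq_ev_zero hc hE0)

lemma apply_diag_eq_neg_torusSum_mul (hao : v a ≤ ev 0) (hbo : v b ≤ ev 0) (hc : v c = ev 0)
    (hE : ∀ t g k, t ∈ TSet a b c → k ∈ Iwahori v → B (t * g * k) = Ω t * B g)
    (hI : ∀ g k, k ∈ Iwahori v → B (g * k) = B g) {R : Finset F} (hR : IsResidueReps v R)
    {y : F} (hy : v y ≤ ev 1)
    (hN : ∑ u ∈ R, B (!![y, 0; 0, 1] * !![1, 0; u, 1]) = -B (!![y, 0; 0, 1] * wmat F)) :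
    B !![y, 0; 0, 1] = -torusSum v a b c Ω R y * B (!![y, 0; 0, 1] * wmat F) := by
  have hterm : ∀ u ∈ R, B (!![y, 0; 0, 1] * !![1, 0; u, 1]) =
      if v u ≤ ev 1 then B !![y, 0; 0, 1]
      else Ω (tmat a b c (c * u + b * y) y) * B (!![y, 0; 0, 1] * wmat F) := by
    intro u hu
    split_ifs with hu1
    · exact hI _ _ (mem_Iwahori_of_unit_diag map_one_eq_ev_zero (by simp) hu1 map_one_eq_ev_zero)
    · exact apply_diag_mul_lower_of_unit hao hbo hc hE hy
        (eq_ev_zero_of_le_of_not_le (hR.1 u hu) hu1)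
  rw [Finset.sum_congr rfl hterm, Finset.sum_ite, Finset.sum_const, hR.card_filter_le_ev_one,
    one_smul, ← Finset.sum_mul] at hN
  rw [torusSum, Finset.sum_ite, Finset.sum_const, hR.card_filter_le_ev_one, one_smul]
  linear_combination hN

lemma apply_diag_mul_atkinLehner (hI : ∀ g k, k ∈ Iwahori v → B (g * k) = B g) {ϖ : F} {κ : ℂ}
    (hA : ∀ g, B (g * !![0, 1; ϖ, 0]) = κ * B g) (y : F) :
    B !![y * ϖ, 0; 0, 1] = κ * B (!![y, 0; 0, 1] * wmat F) := by
  rw [← hA, diag_mul_wmat_mul_atkinLehner, hI _ _ (mem_Iwahori_of_unit_diag map_one_eq_ev_zero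
    (by simp) (by simp) (by rw [v.map_neg]; exact map_one_eq_ev_zero))]

end IwahoriVector

lemma eq_zero_of_eq_zero_of_le {β γ s : ℕ → ℂ} {κ : ℂ} (hκ : κ ≠ 0)
    (hβ : ∀ m, 1 ≤ m → β m = s m * γ m) (hsucc : ∀ m, β (m + 1) = κ * γ m)
    {n m : ℕ} (hm : 1 ≤ m) (hmn : m ≤ n) (hn : β n = 0) : β m = 0 := by
  refine Nat.decreasingInduction' (fun k _ hmk ih => ?_) hmn hn
  rw [hsucc, mul_eq_zero] at ih
  rw [hβ k (hm.trans hmk), ih.resolve_left hκ, mul_zero]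

theorem stmt10_general
    (v : Valuation F Zm0) (ϖ : F) (hϖ : v ϖ = ev 1)
    (a b c : F)
    (hao : v a ≤ ev 0) (hbo : v b ≤ ev 0) (hc : v c = ev 0)
    -- q is the cardinality of the residue field 𝔬/𝔭 :
    (q : ℕ) (hq : ∃ R : Finset F, R.card = q ∧ (∀ r ∈ R, v r ≤ ev 0) ∧
      ∀ x : F, v x ≤ ev 0 → ∃! r, r ∈ R ∧ v (x - r) ≤ ev 1)
    -- χ : F^× → ℂ^× a homomorphism trivial on 𝔬^× :
    (χ : F → ℂ)
    (hχne : ∀ x : F, x ≠ 0 → χ x ≠ 0)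
    (hχtriv : ∀ u : F, v u = ev 0 → χ u = 1)
    -- Ω : T(F) → ℂ^× a homomorphism with conductor exponent C and Ω(z·1) = χ(z)² :
    (Ω : Matrix (Fin 2) (Fin 2) F → ℂ)
    (hΩmul : ∀ s t, s ∈ TSet a b c → t ∈ TSet a b c → Ω (s * t) = Ω s * Ω t)
    (hΩne : ∀ t ∈ TSet a b c, Ω t ≠ 0)
    (C : ℕ)
    (hcond : ∀ t, Umem v a b c C t → Ω t = 1)
    (hleast : ∀ m : ℕ, m < C → ∃ t, Umem v a b c m t ∧ Ω t ≠ 1)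
    (hcent : ∀ z : F, z ≠ 0 → Ω (z • (1 : Matrix (Fin 2) (Fin 2) F)) = (χ z) ^ 2)
    (B : Matrix (Fin 2) (Fin 2) F → ℂ)
    -- (E) equivariance :
    (hE : ∀ t g k, t ∈ TSet a b c → k ∈ Iwahori v → B (t * g * k) = Ω t * B g)
    -- (N) summing over any set of representatives of 𝔬/𝔭 :
    (hN : ∀ R : Finset F, (∀ r ∈ R, v r ≤ ev 0) →
      (∀ x : F, v x ≤ ev 0 → ∃! r, r ∈ R ∧ v (x - r) ≤ ev 1) →
      ∀ g, (∑ u ∈ R, B (g * !![1, 0; u, 1])) = - B (g * wmat F))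
    -- (A) Atkin–Lehner eigenvector property :
    (hA : ∀ g, B (g * !![0, 1; ϖ, 0]) = -(χ ϖ) * B g) :
    ∀ r : ℕ, 1 ≤ r →
      (C ≤ r → B !![ϖ ^ r, 0; 0, 1] = -(q : ℂ) * B (!![ϖ ^ r, 0; 0, 1] * wmat F))
      ∧ (r < C → B !![ϖ ^ r, 0; 0, 1] = 0) := by
  obtain ⟨R, rfl, hR⟩ := hq
  have hcentral : ∀ x, v x = ev 0 → Ω (x • 1) = 1 := fun x hx => by
    rw [hcent x (ne_zero_of_map_eq_ev hx), hχtriv x hx, one_pow]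
  have hI : ∀ g k, k ∈ Iwahori v → B (g * k) = B g := fun g k hk => by
    simpa [apply_one_eq_one_of_map_mul hΩmul hΩne] using hE 1 g k one_mem_TSet hk
  have hvϖ : ∀ m : ℕ, v (ϖ ^ m) = ev m := fun m => by rw [map_pow, hϖ, ev_one_pow]
  have hvϖ_le : ∀ {k m : ℕ}, k ≤ m → v (ϖ ^ m) ≤ ev k := fun h =>
    (hvϖ _).trans_le (ev_le_ev.2 (by exact_mod_cast h))
  have hkey : ∀ m : ℕ, 1 ≤ m → B !![ϖ ^ m, 0; 0, 1] =
      -torusSum v a b c Ω R (ϖ ^ m) * B (!![ϖ ^ m, 0; 0, 1] * wmat F) := fun m hm =>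
    apply_diag_eq_neg_torusSum_mul hao hbo hc hE hI hR (hvϖ_le hm) (hN R hR.1 hR.2 _)
  intro r hr
  refine ⟨fun hCr => ?_, fun hrC => ?_⟩
  · rw [hkey r hr,
      torusSum_eq_card hao hbo hc hΩmul hcentral hcond hR (hvϖ_le hr) (hvϖ_le hCr)]
  obtain ⟨n, rfl⟩ : ∃ n, C = n + 1 := ⟨C - 1, by omega⟩
  obtain ⟨t, ht, hΩt⟩ := hleast n (by omega)
  obtain ⟨z₀, hz₀, hΩz₀⟩ := exists_apply_tmat_one_ne_one hc hΩmul hcentral (by omega) ht hΩt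
  refine eq_zero_of_eq_zero_of_le (neg_ne_zero.2 (hχne ϖ (ne_zero_of_map_eq_ev hϖ))) hkey
    (fun m => by rw [pow_succ]; exact apply_diag_mul_atkinLehner hI hA _) hr (n := n) (by omega) ?_
  rw [hkey n (by omega), torusSum_eq_zero hao hbo hc hΩmul hΩne hcentral (by omega) hcond hR
    (hvϖ n) hz₀ hΩz₀, neg_zero, zero_mul]

/-- values of the Iwahori-fixed Atkin–Lehner eigenvector B in the
Ω-Waldspurger model: for r ≥ 1, B(diag(ϖ^r,1)) = −q·B(diag(ϖ^r,1)·w) if r ≥ c(Ω), and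
B(diag(ϖ^r,1)) = 0 if r < c(Ω). -/
theorem stmt10
    (v : Valuation F Zm0) (ϖ : F) (hϖ : v ϖ = ev 1)
    (a b c : F)
    (hao : v a ≤ ev 0) (hbo : v b ≤ ev 0) (hc : v c = ev 0)
    (hd0 : b ^ 2 - 4 * (a * c) ≠ 0)
    (hnonsq : ∀ s : F, s ^ 2 ≠ b ^ 2 - 4 * (a * c))
    -- q is the cardinality of the residue field 𝔬/𝔭 :
    (q : ℕ) (hq : ∃ R : Finset F, R.card = q ∧ (∀ r ∈ R, v r ≤ ev 0) ∧
      ∀ x : F, v x ≤ ev 0 → ∃! r, r ∈ R ∧ v (x - r) ≤ ev 1)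
    -- χ : F^× → ℂ^× a homomorphism trivial on 𝔬^× :
    (χ : F → ℂ)
    (hχmul : ∀ x y : F, x ≠ 0 → y ≠ 0 → χ (x * y) = χ x * χ y)
    (hχne : ∀ x : F, x ≠ 0 → χ x ≠ 0)
    (hχtriv : ∀ u : F, v u = ev 0 → χ u = 1)
    -- Ω : T(F) → ℂ^× a homomorphism with conductor exponent C and Ω(z·1) = χ(z)² :
    (Ω : Matrix (Fin 2) (Fin 2) F → ℂ)
    (hΩmul : ∀ s t, s ∈ TSet a b c → t ∈ TSet a b c → Ω (s * t) = Ω s * Ω t)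
    (hΩne : ∀ t ∈ TSet a b c, Ω t ≠ 0)
    (C : ℕ)
    (hcond : ∀ t, Umem v a b c C t → Ω t = 1)
    (hleast : ∀ m : ℕ, m < C → ∃ t, Umem v a b c m t ∧ Ω t ≠ 1)
    (hcent : ∀ z : F, z ≠ 0 → Ω (z • (1 : Matrix (Fin 2) (Fin 2) F)) = (χ z) ^ 2)
    (B : Matrix (Fin 2) (Fin 2) F → ℂ)
    -- (E) equivariance :
    (hE : ∀ t g k, t ∈ TSet a b c → k ∈ Iwahori v → B (t * g * k) = Ω t * B g)
    -- (N) summing over any set of representatives of 𝔬/𝔭 :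
    (hN : ∀ R : Finset F, (∀ r ∈ R, v r ≤ ev 0) →
      (∀ x : F, v x ≤ ev 0 → ∃! r, r ∈ R ∧ v (x - r) ≤ ev 1) →
      ∀ g, (∑ u ∈ R, B (g * !![1, 0; u, 1])) = - B (g * wmat F))
    -- (A) Atkin–Lehner eigenvector property :
    (hA : ∀ g, B (g * !![0, 1; ϖ, 0]) = -(χ ϖ) * B g) :
    ∀ r : ℕ, 1 ≤ r →
      (C ≤ r → B !![ϖ ^ r, 0; 0, 1] = -(q : ℂ) * B (!![ϖ ^ r, 0; 0, 1] * wmat F))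
      ∧ (r < C → B !![ϖ ^ r, 0; 0, 1] = 0) :=
  stmt10_general v ϖ hϖ a b c hao hbo hc q hq χ hχne hχtriv Ω hΩmul hΩne C hcond hleast hcent B hE
    hN hA
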